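/- arXiv:2105.04146 — 2 statements merged into one kernel-verified Lean document; each statement's English description precedes it below -/
import Mathlib

section
/- Let M be a maximal matching of a simple graph G, let e ∉ M, let F = M ∩ Γ(e) (so |F| ≤ 2), and let M' = complete((M \ F) ∪ {e}). Then every edge of M' \ ((M \ F) ∪ {e}) is adjacent to some edge of F; consequently |M' \ ((M \ F) ∪ {e})| ≤ 2 and |M △ M'| ≤ 5. -/
open SimpleGraph

variable {V : Type*}

def IsMatchingF (G : SimpleGraph V) (M : Finset (Sym2 V)) : Prop :=
  (∀ e ∈ M, e ∈ G.edgeSet) ∧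
    ∀ e ∈ M, ∀ f ∈ M, e ≠ f → ∀ v : V, v ∈ e → v ∉ f

def IsMaximalMatchingF [DecidableEq V] (G : SimpleGraph V) (M : Finset (Sym2 V)) : Prop :=
  IsMatchingF G M ∧ ∀ e ∈ G.edgeSet, e ∉ M → ¬ IsMatchingF G (insert e M)

/-- `v` is unmatched by the matching `M`. -/
def Unmatched (M : Finset (Sym2 V)) (v : V) : Prop := ∀ e ∈ M, v ∉ e

/-- The graph `G[M₁ △ M₂]` on the symmetric difference of two edge sets. -/
def sdGraph [DecidableEq V] (M₁ M₂ : Finset (Sym2 V)) : SimpleGraph V where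
  Adj v w := v ≠ w ∧ s(v, w) ∈ (M₁ \ M₂) ∪ (M₂ \ M₁)
  symm := by
    refine ⟨?_⟩
    intro v w h
    exact ⟨h.1.symm, by rw [Sym2.eq_swap]; exact h.2⟩
  loopless := ⟨fun v h => h.1 rfl⟩

/-- The walk `p` is a path which is exactly a connected component of `H`
(it spans the component and uses all of its edges, and has at least one edge). -/
def IsPathComponent [DecidableEq V] (H : SimpleGraph V) {u w : V} (p : H.Walk u w) : Prop :=
  p.IsPath ∧ 1 ≤ p.length ∧
    (∀ x : V, x ∈ p.support ↔ H.connectedComponentMk x = H.connectedComponentMk u) ∧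
    (∀ a b : V, H.Adj a b → a ∈ p.support → s(a, b) ∈ p.edges)

/-- The closed walk `p` is a cycle which is exactly a connected component of `H`. -/
def IsCycleComponent [DecidableEq V] (H : SimpleGraph V) {u : V} (p : H.Walk u u) : Prop :=
  p.IsCycle ∧
    (∀ x : V, x ∈ p.support ↔ H.connectedComponentMk x = H.connectedComponentMk u) ∧
    (∀ a b : V, H.Adj a b → a ∈ p.support → s(a, b) ∈ p.edges)

/-- `M` minus all edges sharing an endpoint with `e` (i.e. `M \ Γ(e)` for `e ∉ M`). -/
def removeAdj [Fintype V] [DecidableEq V] (M : Finset (Sym2 V)) (e : Sym2 V) :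
    Finset (Sym2 V) :=
  M.filter fun f => ¬ ∃ v : V, v ∈ e ∧ v ∈ f

/-- `comp` greedily extends any matching of `G` to a maximal matching containing it. -/
def CompletionFun [DecidableEq V] (G : SimpleGraph V)
    (comp : Finset (Sym2 V) → Finset (Sym2 V)) : Prop :=
  ∀ M : Finset (Sym2 V), IsMatchingF G M → M ⊆ comp M ∧ IsMaximalMatchingF G (comp M)

/-- The arcs of the solution graph 𝒢: from `M` to `comp((M \ Γ(e)) ∪ {e})` for `e ∉ M`. -/
def GStep [Fintype V] [DecidableEq V] (G : SimpleGraph V)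
    (comp : Finset (Sym2 V) → Finset (Sym2 V)) (M M' : Finset (Sym2 V)) : Prop :=
  ∃ e ∈ G.edgeSet, e ∉ M ∧ M' = comp (insert e (removeAdj M e))
/-!
Since `M` is maximal, every edge `f ∈ M' \ M` meets an edge `g ∈ M`; as `M'` is a matching
containing `f`, `g ∉ M'`, and `M \ M' ⊆ F` because `M \ F ⊆ M'`. Each edge of `F` meets
`e ∈ M'` in one endpoint, so only its other endpoint is free for an edge of `M'` besides `e`:
hence the new edges inject into `F`, and `|F| ≤ 2` because the edges of `F` are disjoint and
meet `e`.
-/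

open Finset

namespace IsMatchingF

variable {G : SimpleGraph V} {M : Finset (Sym2 V)}

theorem subset (hM : IsMatchingF G M) {N : Finset (Sym2 V)} (hNM : N ⊆ M) : IsMatchingF G N :=
  ⟨fun f hf => hM.1 f (hNM hf), fun f hf g hg => hM.2 f (hNM hf) g (hNM hg)⟩

theorem eq_of_mem_of_mem (hM : IsMatchingF G M) {f g : Sym2 V} (hf : f ∈ M) (hg : g ∈ M)
    {v : V} (hvf : v ∈ f) (hvg : v ∈ g) : f = g := by
  by_contra hne
  exact hM.2 f hf g hg hne v hvf hvg

theorem notMem_of_mem_erase [DecidableEq V] (hM : IsMatchingF G M) {e f : Sym2 V} (he : e ∈ M)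
    (hf : f ∈ M.erase e) {v : V} (hvf : v ∈ f) : v ∉ e := fun hve =>
  (mem_erase.1 hf).1 (hM.eq_of_mem_of_mem (mem_of_mem_erase hf) he hvf hve)

theorem insert [DecidableEq V] (hM : IsMatchingF G M) {f : Sym2 V} (hf : f ∈ G.edgeSet)
    (hfree : ∀ g ∈ M, ∀ v ∈ f, v ∉ g) : IsMatchingF G (insert f M) := by
  refine ⟨fun g hg => ?_, fun g hg g' hg' hne v hv hv' => ?_⟩
  · rcases mem_insert.1 hg with rfl | hg
    exacts [hf, hM.1 g hg]
  · rcases mem_insert.1 hg with rfl | hgM <;> rcases mem_insert.1 hg' with rfl | hg'M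
    · exact hne rfl
    · exact hfree g' hg'M v hv hv'
    · exact hfree g hgM v hv' hv
    · exact hM.2 g hgM g' hg'M hne v hv hv'

theorem card_le_of_forall_exists_mem (hM : IsMatchingF G M) {S : Finset V}
    (h : ∀ f ∈ M, ∃ v ∈ S, v ∈ f) : #M ≤ #S :=
  card_le_card_of_forall_subsingleton (fun f v => v ∈ f) h
    fun _ _ _ ⟨hf, hvf⟩ _ ⟨hg, hvg⟩ => hM.eq_of_mem_of_mem hf hg hvf hvg

theorem card_le_two_of_forall_exists_mem [DecidableEq V] (hM : IsMatchingF G M) {e : Sym2 V}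
    (h : ∀ f ∈ M, ∃ v ∈ e, v ∈ f) : #M ≤ 2 := by
  refine (hM.card_le_of_forall_exists_mem (S := e.toFinset) fun f hf => ?_).trans ?_
  · obtain ⟨v, hve, hvf⟩ := h f hf
    exact ⟨v, Sym2.mem_toFinset.2 hve, hvf⟩
  · rw [Sym2.card_toFinset]
    split_ifs <;> omega

theorem card_le_of_forall_exists_meets [DecidableEq V] (hM : IsMatchingF G M) {e : Sym2 V}
    (he : e ∈ M) {D F : Finset (Sym2 V)} (hD : D ⊆ M.erase e)
    (hF : ∀ f' ∈ F, ∃ x ∈ e, x ∈ f')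
    (h : ∀ f ∈ D, ∃ f' ∈ F, ∃ v, v ∈ f ∧ v ∈ f') : #D ≤ #F := by
  refine card_le_card_of_forall_subsingleton (fun f f' => ∃ v, v ∈ f ∧ v ∈ f') h ?_
  rintro f' hf' f₁ ⟨hf₁, v₁, hv₁, hv₁'⟩ f₂ ⟨hf₂, v₂, hv₂, hv₂'⟩
  obtain ⟨x, hxe, hxf'⟩ := hF f' hf'
  have hx₁ : x ≠ v₁ := fun h => hM.notMem_of_mem_erase he (hD hf₁) hv₁ (h ▸ hxe)
  have hx₂ : x ≠ v₂ := fun h => hM.notMem_of_mem_erase he (hD hf₂) hv₂ (h ▸ hxe)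
  have hv : v₂ = v₁ := by
    rw [(Sym2.mem_and_mem_iff hx₁).1 ⟨hxf', hv₁'⟩, Sym2.mem_iff] at hv₂'
    exact hv₂'.resolve_left hx₂.symm
  exact hM.eq_of_mem_of_mem (mem_of_mem_erase (hD hf₁)) (mem_of_mem_erase (hD hf₂)) hv₁
    (hv ▸ hv₂)

end IsMatchingF

namespace IsMaximalMatchingF

variable [DecidableEq V] {G : SimpleGraph V} {M : Finset (Sym2 V)}

theorem exists_meets_of_notMem (hM : IsMaximalMatchingF G M) {f : Sym2 V} (hf : f ∈ G.edgeSet)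
    (hfM : f ∉ M) : ∃ g ∈ M, ∃ v, v ∈ f ∧ v ∈ g := by
  by_contra! h
  exact hM.2 f hf hfM (hM.1.insert hf h)

theorem exists_meets_sdiff (hM : IsMaximalMatchingF G M) {M' : Finset (Sym2 V)}
    (hM' : IsMatchingF G M') {f : Sym2 V} (hf : f ∈ M' \ M) :
    ∃ g ∈ M \ M', ∃ v, v ∈ f ∧ v ∈ g := by
  obtain ⟨hfM', hfM⟩ := mem_sdiff.1 hf
  obtain ⟨g, hg, v, hvf, hvg⟩ := hM.exists_meets_of_notMem (hM'.1 f hfM') hfM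
  refine ⟨g, mem_sdiff.2 ⟨hg, fun hgM' => hfM ?_⟩, v, hvf, hvg⟩
  rwa [hM'.eq_of_mem_of_mem hfM' hgM' hvf hvg]

end IsMaximalMatchingF

theorem stmt16_general [Fintype V] [DecidableEq V] (G : SimpleGraph V)
    (M M' F : Finset (Sym2 V)) (e : Sym2 V)
    (hM : IsMaximalMatchingF G M)
    (hF : F = M.filter fun f => ∃ v : V, v ∈ e ∧ v ∈ f)
    (hM' : IsMaximalMatchingF G M') (hsub : insert e (M \ F) ⊆ M') :
    (∀ f ∈ M' \ insert e (M \ F), ∃ f' ∈ F, ∃ v : V, v ∈ f ∧ v ∈ f') ∧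
      (M' \ insert e (M \ F)).card ≤ 2 ∧ (symmDiff M M').card ≤ 5 := by
  set D := M' \ insert e (M \ F)
  have hFM : F ⊆ M := hF ▸ filter_subset _ _
  have hFe : ∀ f ∈ F, ∃ v ∈ e, v ∈ f := fun f hf => by
    rw [hF] at hf
    exact (mem_filter.1 hf).2
  have heM' : e ∈ M' := hsub (mem_insert_self e _)
  have hMM' : M \ M' ⊆ F := sdiff_le_comm.1 ((subset_insert e _).trans hsub)
  have hDe : D ⊆ M'.erase e := fun f => by simp only [D, mem_sdiff, mem_insert, mem_erase]; tauto
  have hDM : D ⊆ M' \ M := fun f hf => by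
    refine mem_sdiff.2 ⟨mem_of_mem_erase (hDe hf), fun hfM => ?_⟩
    have hfF : f ∈ F := by_contra fun hfF =>
      (mem_sdiff.1 hf).2 (mem_insert_of_mem (mem_sdiff.2 ⟨hfM, hfF⟩))
    obtain ⟨v, hve, hvf⟩ := hFe f hfF
    exact hM'.1.notMem_of_mem_erase heM' (hDe hf) hvf hve
  have hmeets : ∀ f ∈ D, ∃ f' ∈ F, ∃ v, v ∈ f ∧ v ∈ f' := fun f hf =>
    let ⟨g, hg, hv⟩ := hM.exists_meets_sdiff hM'.1 (hDM hf)
    ⟨g, hMM' hg, hv⟩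
  have hF2 : #F ≤ 2 := (hM.1.subset hFM).card_le_two_of_forall_exists_mem hFe
  have hDF : #D ≤ #F := hM'.1.card_le_of_forall_exists_meets heM' hDe hFe hmeets
  have hM'M : M' \ M ⊆ insert e D := fun f => by simp only [D, mem_sdiff, mem_insert]; tauto
  refine ⟨hmeets, hDF.trans hF2, ?_⟩
  calc #(symmDiff M M') ≤ #(M \ M') + #(M' \ M) := card_union_le _ _
    _ ≤ #F + #(insert e D) := add_le_add (card_le_card hMM') (card_le_card hM'M)
    _ ≤ 2 + (2 + 1) := add_le_add hF2 ((card_insert_le _ _).trans (by omega))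

theorem stmt16 [Fintype V] [DecidableEq V] (G : SimpleGraph V)
    (M M' F : Finset (Sym2 V)) (e : Sym2 V)
    (hM : IsMaximalMatchingF G M) (he : e ∈ G.edgeSet) (heM : e ∉ M)
    (hF : F = M.filter fun f => ∃ v : V, v ∈ e ∧ v ∈ f)
    (hM' : IsMaximalMatchingF G M') (hsub : insert e (M \ F) ⊆ M') :
    (∀ f ∈ M' \ insert e (M \ F), ∃ f' ∈ F, ∃ v : V, v ∈ f ∧ v ∈ f') ∧
      (M' \ insert e (M \ F)).card ≤ 2 ∧ (symmDiff M M').card ≤ 5 :=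
  stmt16_general G M M' F e hM hF hM' hsub
end

section
/- Let G be a graph with 2n ≥ 4 vertices obtained from the complete graph K_{2n} by attaching one pendant vertex to each vertex of K_{2n}. Then G has exactly one maximal matching of cardinality 2n (namely the set of all pendant edges), while the number of maximal matchings of G is at least (2n)!/(2ⁿ · n!), the number of perfect matchings of K_{2n}. -/
open SimpleGraph

variable {V : Type*}

/-- The complete graph `K_{2n}` (the `Sum.inl` vertices) with a pendant vertex
(`Sum.inr a`) attached to each clique vertex (`Sum.inl a`). -/
def pendGraph (n : ℕ) : SimpleGraph (Fin (2 * n) ⊕ Fin (2 * n)) :=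
  SimpleGraph.fromRel (fun x y =>
    match x, y with
    | Sum.inl _, Sum.inl _ => True
    | Sum.inl a, Sum.inr b => a = b
    | _, _ => False)

/-!
A matching with `2n` edges covers all `4n` vertices; since the only edge at the pendant vertex
`inr a` is `s(inl a, inr a)`, it contains every pendant edge and hence equals the pendant matching.
Every perfect matching of the clique covers all clique vertices, so it meets every edge and is
maximal. Labelling such matchings by bijections `Fin n × Bool ≃ Fin (2n)`, a matching has at most
`2ⁿ n!` labels (a permutation of its pairs and an orientation of each pair), which gives the bound.
-/

open Finset
open scoped Nat

namespace IsMatchingF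

variable {G : SimpleGraph V} {M : Finset (Sym2 V)}

theorem isMaximalMatchingF [DecidableEq V] (hM : IsMatchingF G M)
    (hcover : ∀ x y, G.Adj x y → ∃ f ∈ M, x ∈ f ∨ y ∈ f) : IsMaximalMatchingF G M := by
  refine ⟨hM, fun e he heM hins => ?_⟩
  induction e using Sym2.ind with
  | _ x y =>
    obtain ⟨f, hf, hxf | hyf⟩ := hcover x y he
    all_goals
      have hne : s(x, y) ≠ f := fun h => heM (h ▸ hf)
      refine hins.2 _ (mem_insert_self _ _) f (mem_insert_of_mem hf) hne _ ?_ ‹_›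
      simp

theorem card_biUnion_toFinset [DecidableEq V] (hM : IsMatchingF G M) :
    #(M.biUnion Sym2.toFinset) = 2 * #M := by
  rw [card_biUnion, sum_congr rfl fun e he =>
    Sym2.card_toFinset_of_not_isDiag e (G.not_isDiag_of_mem_edgeSet (hM.1 e he)), sum_const,
    smul_eq_mul, mul_comm]
  intro e he f hf hef
  exact disjoint_left.2 fun v hve hvf =>
    hM.2 e he f hf hef v (Sym2.mem_toFinset.1 hve) (Sym2.mem_toFinset.1 hvf)

theorem exists_mem_of_two_mul_card_eq [Fintype V] [DecidableEq V] (hM : IsMatchingF G M)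
    (hcard : 2 * #M = Fintype.card V) (v : V) : ∃ e ∈ M, v ∈ e := by
  have hcover : M.biUnion Sym2.toFinset = univ :=
    eq_univ_of_card _ (hM.card_biUnion_toFinset.trans hcard)
  have hv : v ∈ M.biUnion Sym2.toFinset := hcover ▸ mem_univ v
  simpa using hv

end IsMatchingF

section PendGraph

variable {n : ℕ} {a b : Fin (2 * n)}

@[simp]
theorem pendGraph_adj_inl_inl : (pendGraph n).Adj (.inl a) (.inl b) ↔ a ≠ b := by
  simp [pendGraph]

@[simp]
theorem pendGraph_adj_inl_inr : (pendGraph n).Adj (.inl a) (.inr b) ↔ a = b := by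
  simp [pendGraph]

@[simp]
theorem pendGraph_adj_inr_inl : (pendGraph n).Adj (.inr a) (.inl b) ↔ a = b := by
  simp [pendGraph, eq_comm]

@[simp]
theorem pendGraph_not_adj_inr_inr : ¬ (pendGraph n).Adj (.inr a) (.inr b) := by
  simp [pendGraph]

theorem eq_of_mem_edgeSet_pendGraph {e : Sym2 (Fin (2 * n) ⊕ Fin (2 * n))}
    (he : e ∈ (pendGraph n).edgeSet) (ha : .inr a ∈ e) : e = s(.inl a, .inr a) := by
  induction e using Sym2.ind with
  | _ x y =>
    rcases x with c | c <;> rcases y with d | d <;> simp_all [Sym2.eq_swap]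

end PendGraph

def pendantMatching (n : ℕ) : Finset (Sym2 (Fin (2 * n) ⊕ Fin (2 * n))) :=
  univ.image fun a => s(.inl a, .inr a)

theorem card_pendantMatching (n : ℕ) : #(pendantMatching n) = 2 * n := by
  rw [pendantMatching, card_image_of_injective _ fun a b h => by simpa using h]
  simp

theorem isMaximalMatchingF_pendantMatching (n : ℕ) :
    IsMaximalMatchingF (pendGraph n) (pendantMatching n) := by
  refine IsMatchingF.isMaximalMatchingF ⟨?_, ?_⟩ ?_
  · simp [pendantMatching]
  · simp only [pendantMatching, mem_image, mem_univ, true_and]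
    rintro _ ⟨a, rfl⟩ _ ⟨b, rfl⟩ hab v hva hvb
    rcases Sym2.mem_iff.1 hva with rfl | rfl <;> simp_all
  · rintro (a | a) y -
    all_goals exact ⟨s(.inl a, .inr a), mem_image_of_mem _ (mem_univ a), Or.inl (by simp)⟩

theorem eq_pendantMatching_of_card {n : ℕ} {M : Finset (Sym2 (Fin (2 * n) ⊕ Fin (2 * n)))}
    (hM : IsMatchingF (pendGraph n) M) (hcard : #M = 2 * n) : M = pendantMatching n := by
  have hsub : pendantMatching n ⊆ M := by
    intro e he
    obtain ⟨a, -, rfl⟩ := mem_image.1 he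
    obtain ⟨f, hf, haf⟩ := hM.exists_mem_of_two_mul_card_eq (by simp [hcard]; ring) (.inr a)
    rwa [← eq_of_mem_edgeSet_pendGraph (hM.1 f hf) haf]
  exact (eq_of_subset_of_card_le hsub (by rw [hcard, card_pendantMatching])).symm

section CliqueMatching

variable {n : ℕ} (σ : Fin n × Bool ≃ Fin (2 * n))

/-- The `i`-th pair of the perfect matching of the clique labelled by `σ`. -/
def cliqueEdge (i : Fin n) : Sym2 (Fin (2 * n) ⊕ Fin (2 * n)) :=
  s(.inl (σ (i, false)), .inl (σ (i, true)))

def cliqueMatching : Finset (Sym2 (Fin (2 * n) ⊕ Fin (2 * n))) :=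
  univ.image (cliqueEdge σ)

theorem mem_cliqueEdge {i : Fin n} {v : Fin (2 * n) ⊕ Fin (2 * n)} :
    v ∈ cliqueEdge σ i ↔ ∃ b, v = .inl (σ (i, b)) := by
  simp [cliqueEdge, Sym2.mem_iff]

theorem isMaximalMatchingF_cliqueMatching :
    IsMaximalMatchingF (pendGraph n) (cliqueMatching σ) := by
  have hcover (x : Fin (2 * n)) : cliqueEdge σ (σ.symm x).1 ∈ cliqueMatching σ ∧
      .inl x ∈ cliqueEdge σ (σ.symm x).1 :=
    ⟨mem_image_of_mem _ (mem_univ _), (mem_cliqueEdge σ).2 ⟨(σ.symm x).2, by simp⟩⟩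
  refine IsMatchingF.isMaximalMatchingF ⟨?_, ?_⟩ ?_
  · simp [cliqueMatching, cliqueEdge]
  · simp only [cliqueMatching, mem_image, mem_univ, true_and]
    rintro _ ⟨i, rfl⟩ _ ⟨j, rfl⟩ hij v hvi hvj
    obtain ⟨b, rfl⟩ := (mem_cliqueEdge σ).1 hvi
    obtain ⟨c, hc⟩ := (mem_cliqueEdge σ).1 hvj
    cases congrArg Prod.fst (σ.injective (Sum.inl_injective hc))
    exact hij rfl
  · rintro (x | x) (y | y) hxy
    · exact ⟨_, (hcover x).1, .inl (hcover x).2⟩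
    · exact ⟨_, (hcover x).1, .inl (hcover x).2⟩
    · exact ⟨_, (hcover y).1, .inr (hcover y).2⟩
    · simp at hxy

variable {σ} {σ₀ : Fin n × Bool ≃ Fin (2 * n)}

theorem apply_eq_of_cliqueMatching_eq (h : cliqueMatching σ = cliqueMatching σ₀) (i : Fin n)
    (b : Bool) :
    σ (i, b) = σ₀ ((σ₀.symm (σ (i, false))).1, xor b (σ₀.symm (σ (i, false))).2) := by
  have hi : cliqueEdge σ i ∈ cliqueMatching σ₀ := h ▸ mem_image_of_mem _ (mem_univ i)
  obtain ⟨j, -, hj⟩ := mem_image.1 hi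
  simp only [cliqueEdge, Sym2.eq_iff, Sum.inl.injEq] at hj
  rcases hj with ⟨h0, h1⟩ | ⟨h0, h1⟩ <;> cases b <;> simp [← h0, ← h1]

theorem injective_fst_symm_apply_of_cliqueMatching_eq (h : cliqueMatching σ = cliqueMatching σ₀) :
    Function.Injective fun i => (σ₀.symm (σ (i, false))).1 := by
  intro i i' hii'
  simp only at hii'
  have : σ (i', xor (σ₀.symm (σ (i, false))).2 (σ₀.symm (σ (i', false))).2) = σ (i, false) := by
    rw [apply_eq_of_cliqueMatching_eq h i', ← hii']
    simp
  exact (congrArg Prod.fst (σ.injective this)).symm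

theorem card_filter_cliqueMatching_eq_le (σ₀ : Fin n × Bool ≃ Fin (2 * n)) :
    #{σ | cliqueMatching σ = cliqueMatching σ₀} ≤ 2 ^ n * n ! := by
  rw [← Fintype.card_subtype]
  -- `σ` in the fibre is recorded by the pair of `σ₀` containing each `σ (i, false)`, and its end.
  calc Fintype.card {σ // cliqueMatching σ = cliqueMatching σ₀}
      ≤ Fintype.card ((Fin n ↪ Fin n) × (Fin n → Bool)) := by
        refine Fintype.card_le_of_injective (fun σ =>
          (⟨_, injective_fst_symm_apply_of_cliqueMatching_eq σ.2⟩,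
            fun i => (σ₀.symm (σ.1 (i, false))).2)) ?_
        rintro ⟨σ, hσ⟩ ⟨σ', hσ'⟩ hσσ'
        have hfalse (i : Fin n) : σ₀.symm (σ (i, false)) = σ₀.symm (σ' (i, false)) :=
          Prod.ext (DFunLike.congr_fun (congrArg Prod.fst hσσ') i)
            (congrFun (congrArg Prod.snd hσσ') i)
        ext ⟨i, b⟩ : 2
        rw [apply_eq_of_cliqueMatching_eq hσ, apply_eq_of_cliqueMatching_eq hσ', hfalse]
    _ = 2 ^ n * n ! := by simp [Fintype.card_embedding_eq, Nat.descFactorial_self, mul_comm]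

theorem factorial_le_mul_card_image_cliqueMatching (n : ℕ) :
    (2 * n)! ≤ 2 ^ n * n ! * #(univ.image (cliqueMatching (n := n))) := by
  have hcard : #(univ : Finset (Fin n × Bool ≃ Fin (2 * n))) = (2 * n)! := by
    rw [card_univ, Fintype.card_equiv (Fintype.equivOfCardEq (by simp [mul_comm]))]
    simp [mul_comm]
  rw [← hcard]
  refine card_le_mul_card_image _ _ fun M hM => ?_
  obtain ⟨σ₀, -, rfl⟩ := mem_image.1 hM
  exact card_filter_cliqueMatching_eq_le σ₀

end CliqueMatching

theorem stmt19_general (n : ℕ) :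
    IsMaximalMatchingF (pendGraph n)
        (Finset.univ.image fun a : Fin (2 * n) => s(Sum.inl a, Sum.inr a)) ∧
      (Finset.univ.image fun a : Fin (2 * n) => s(Sum.inl a, Sum.inr a)).card = 2 * n ∧
      (∀ M : Finset (Sym2 (Fin (2 * n) ⊕ Fin (2 * n))),
        IsMaximalMatchingF (pendGraph n) M → M.card = 2 * n →
          M = Finset.univ.image fun a : Fin (2 * n) => s(Sum.inl a, Sum.inr a)) ∧
      (2 * n).factorial / (2 ^ n * n.factorial) ≤
        {M : Finset (Sym2 (Fin (2 * n) ⊕ Fin (2 * n))) |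
          IsMaximalMatchingF (pendGraph n) M}.ncard := by
  refine ⟨isMaximalMatchingF_pendantMatching n, card_pendantMatching n,
    fun M hM hcard => eq_pendantMatching_of_card hM.1 hcard, ?_⟩
  calc (2 * n)! / (2 ^ n * n !) ≤ #(univ.image (cliqueMatching (n := n))) :=
        Nat.div_le_of_le_mul (factorial_le_mul_card_image_cliqueMatching n)
    _ ≤ _ := by
        rw [← Set.ncard_coe_finset]
        refine Set.ncard_le_ncard ?_ (Set.toFinite _)
        intro M hM
        obtain ⟨σ, -, rfl⟩ := mem_image.1 hM
        exact isMaximalMatchingF_cliqueMatching σ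

theorem stmt19 (n : ℕ) (hn : 2 ≤ n) :
    IsMaximalMatchingF (pendGraph n)
        (Finset.univ.image fun a : Fin (2 * n) => s(Sum.inl a, Sum.inr a)) ∧
      (Finset.univ.image fun a : Fin (2 * n) => s(Sum.inl a, Sum.inr a)).card = 2 * n ∧
      (∀ M : Finset (Sym2 (Fin (2 * n) ⊕ Fin (2 * n))),
        IsMaximalMatchingF (pendGraph n) M → M.card = 2 * n →
          M = Finset.univ.image fun a : Fin (2 * n) => s(Sum.inl a, Sum.inr a)) ∧
      (2 * n).factorial / (2 ^ n * n.factorial) ≤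
        {M : Finset (Sym2 (Fin (2 * n) ⊕ Fin (2 * n))) |
          IsMaximalMatchingF (pendGraph n) M}.ncard :=
  stmt19_general n
end
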